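/- Let (s,v) and (t,w) be MacLane clusters for f, and set s∧t = D_{v∧w} ∩ R. Then (s∧t, v∧w) is a MacLane cluster for f, and it is the smallest MacLane cluster containing both (s,v) and (t,w): any MacLane cluster (u,z) with z ≤ v and z ≤ w satisfies z ≤ v∧w. -/

import Mathlib

open Polynomial
open scoped Classical

noncomputable section

/-- The value monoid `ℚ ∪ {∞}`. -/
abbrev Qinf : Type := WithTop ℚ

/-- A pseudo-valuation on a commutative ring `A`, with values in `ℚ ∪ {∞}`:
`v (a*b) = v a + v b` and `v (a+b) ≥ min (v a) (v b)`. -/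
structure IsPseudoVal {A : Type*} [CommRing A] (v : A → Qinf) : Prop where
  map_mul : ∀ a b : A, v (a * b) = v a + v b
  min_le_map_add : ∀ a b : A, min (v a) (v b) ≤ v (a + b)

variable {K : Type*} [Field K]

/-- `vK` is a normalised discrete valuation on the field `K`. -/
structure IsNormDiscreteVal (vK : K → Qinf) : Prop where
  pseudo : IsPseudoVal vK
  top_iff : ∀ a : K, vK a = ⊤ ↔ a = 0
  int_valued : ∀ a : K, a ≠ 0 → ∃ n : ℤ, vK a = ((n : ℚ) : Qinf)
  normalised : ∃ π : K, vK π = ((1 : ℚ) : Qinf)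

/-- `K` is complete with respect to the valuation `vK`:
every Cauchy sequence (for `vK`) converges. -/
def IsCompleteVal (vK : K → Qinf) : Prop :=
  ∀ s : ℕ → K,
    (∀ M : ℚ, ∃ N : ℕ, ∀ m, N ≤ m → ∀ n, N ≤ n → ((M : ℚ) : Qinf) ≤ vK (s m - s n)) →
    ∃ a : K, ∀ M : ℚ, ∃ N : ℕ, ∀ n, N ≤ n → ((M : ℚ) : Qinf) ≤ vK (s n - a)

/-- The Gauss valuation on `K[x]`: `v₀ (∑ aᵢ xⁱ) = minᵢ vK aᵢ`. -/
def gaussVal (vK : K → Qinf) (g : Polynomial K) : Qinf :=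
  g.support.inf fun i => vK (g.coeff i)

/-- `g ≈_v h` : `g` is `v`-equivalent to `h`, i.e. `v (g - h) > v g`. -/
def VEquiv (v : Polynomial K → Qinf) (g h : Polynomial K) : Prop :=
  v g < v (g - h)

/-- `h |_v g` : `g` is `v`-divisible by `h`, i.e. `g ≈_v q * h` for some `q`. -/
def VDvd (v : Polynomial K → Qinf) (h g : Polynomial K) : Prop :=
  ∃ q : Polynomial K, VEquiv v g (q * h)

/-- `φ` is `v`-irreducible. -/
def VIrreducible (v : Polynomial K → Qinf) (φ : Polynomial K) : Prop :=
  ∀ a b : Polynomial K, VDvd v φ (a * b) → VDvd v φ a ∨ VDvd v φ b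

/-- `φ` is `v`-minimal: whatever `φ` `v`-divides has degree at least `deg φ`. -/
def VMinimal (v : Polynomial K → Qinf) (φ : Polynomial K) : Prop :=
  ∀ a : Polynomial K, VDvd v φ a → φ.natDegree ≤ a.natDegree

/-- `φ` is a key polynomial over `v`. -/
def IsKeyPoly (v : Polynomial K → Qinf) (φ : Polynomial K) : Prop :=
  φ.Monic ∧ VIrreducible v φ ∧ VMinimal v φ

/-- Auxiliary fuelled definition of the augmented pseudo-valuation. -/
def augValAux (v : Polynomial K → Qinf) (φ : Polynomial K) (lam : Qinf) :
    ℕ → Polynomial K → Qinf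
  | 0, _ => ⊤
  | n + 1, g =>
      if g = 0 then ⊤ else min (v (g %ₘ φ)) (lam + augValAux v φ lam n (g /ₘ φ))

/-- The augmentation `w = [v, w(φ) = λ]`, defined by
`w (∑ aᵢ φ^i) = minᵢ (v aᵢ + i•λ)` on `φ`-adic expansions with `deg aᵢ < deg φ`. -/
def augVal (v : Polynomial K → Qinf) (φ : Polynomial K) (lam : Qinf)
    (g : Polynomial K) : Qinf :=
  augValAux v φ lam (g.natDegree + 1) g

/-- MacLane pseudo-valuations on `K[x]`: obtained from the Gauss valuation by
finitely many augmentations by key polynomials. -/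
inductive IsMacLane (vK : K → Qinf) : (Polynomial K → Qinf) → Prop
  | gauss : IsMacLane vK (gaussVal vK)
  | aug {v : Polynomial K → Qinf} {φ : Polynomial K} {lam : Qinf} :
      IsMacLane vK v → IsKeyPoly v φ → v φ < lam → IsMacLane vK (augVal v φ lam)

/-- MacLane valuations: MacLane pseudo-valuations which are valuations. -/
def IsMacLaneVal (vK : K → Qinf) (v : Polynomial K → Qinf) : Prop :=
  IsMacLane vK v ∧ ∀ g : Polynomial K, v g = ⊤ → g = 0

/-- `φ` is a centre of the MacLane pseudo-valuation `w`: the last key polynomial of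
an augmentation chain for `w` (for the Gauss valuation: any monic integral degree 1
polynomial). -/
def IsCentre (vK : K → Qinf) (w : Polynomial K → Qinf) (φ : Polynomial K) : Prop :=
  (w = gaussVal vK ∧ φ.Monic ∧ φ.natDegree = 1 ∧ ∀ i : ℕ, 0 ≤ vK (φ.coeff i)) ∨
  ∃ (v : Polynomial K → Qinf) (lam : Qinf),
    IsMacLane vK v ∧ IsKeyPoly v φ ∧ v φ < lam ∧ w = augVal v φ lam

/-- `r` is the radius `λ_w` of the MacLane pseudo-valuation `w`. -/
def HasRadius (vK : K → Qinf) (w : Polynomial K → Qinf) (r : Qinf) : Prop :=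
  (w = gaussVal vK ∧ r = 0) ∨
  ∃ (v : Polynomial K → Qinf) (φ : Polynomial K),
    IsMacLane vK v ∧ IsKeyPoly v φ ∧ v φ < r ∧ w = augVal v φ r

/-- `d` is the degree `deg w` of the MacLane pseudo-valuation `w`. -/
def HasMLDegree (vK : K → Qinf) (w : Polynomial K → Qinf) (d : ℕ) : Prop :=
  (w = gaussVal vK ∧ d = 1) ∨
  ∃ (v : Polynomial K → Qinf) (φ : Polynomial K) (lam : Qinf),
    IsMacLane vK v ∧ IsKeyPoly v φ ∧ v φ < lam ∧ w = augVal v φ lam ∧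
      φ.natDegree = d

variable {Kb : Type*} [Field Kb] [Algebra K Kb]

/-- `vbar` is an extension of `vK` to `Kb`. -/
structure IsExtVal (vK : K → Qinf) (vbar : Kb → Qinf) : Prop where
  pseudo : IsPseudoVal vbar
  top_iff : ∀ a : Kb, vbar a = ⊤ ↔ a = 0
  extends_vK : ∀ a : K, vbar (algebraMap K Kb a) = vK a

/-- The discoid `D(g, λ) = {α : v_K(g(α)) ≥ λ}`. -/
def discoidSet (vbar : Kb → Qinf) (g : Polynomial K) (lam : Qinf) : Set Kb :=
  {α : Kb | lam ≤ vbar (Polynomial.aeval α g)}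

/-- `D` is a discoid: `D = D(g, λ)` for some monic irreducible `g` and some `λ`. -/
def IsDiscoid (vbar : Kb → Qinf) (D : Set Kb) : Prop :=
  ∃ (g : Polynomial K) (lam : Qinf), g.Monic ∧ Irreducible g ∧
    D = discoidSet vbar g lam

/-- The set `D_v = {α : v_K(g(α)) ≥ v g for all g}` associated to `v`. -/
def Dset (vbar : Kb → Qinf) (v : Polynomial K → Qinf) : Set Kb :=
  {α : Kb | ∀ g : Polynomial K, v g ≤ vbar (Polynomial.aeval α g)}

/-- The set of roots of `f` in `Kb`. -/
def rootSetOf (f : Polynomial K) : Set Kb :=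
  {α : Kb | Polynomial.aeval α f = 0}

/-- `(s, v)` is a MacLane cluster for `f`. -/
def IsMLCluster (vK : K → Qinf) (vbar : Kb → Qinf) (f : Polynomial K)
    (s : Set Kb) (v : Polynomial K → Qinf) : Prop :=
  IsMacLane vK v ∧ s.Nonempty ∧ s = Dset vbar v ∩ rootSetOf f ∧
  ∀ w : Polynomial K → Qinf, IsMacLane vK w → v < w →
    s = Dset vbar w ∩ rootSetOf f →
    ∀ dv dw : ℕ, HasMLDegree vK v dv → HasMLDegree vK w dw → dv < dw

/-- The `i`-th coefficient `aᵢ` of the `φ`-adic expansion `g = ∑ aᵢ φ^i`. -/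
def phiCoeff (φ : Polynomial K) : ℕ → Polynomial K → Polynomial K
  | 0, g => g %ₘ φ
  | n + 1, g => phiCoeff φ n (g /ₘ φ)

/-- The right endpoint `i_w` of `L_w(f)`, for `w = [v, w(φ) = λ]`. -/
def iEnd (v : Polynomial K → Qinf) (φ : Polynomial K) (lam : Qinf)
    (f : Polynomial K) : ℕ :=
  if lam = ⊤ then sInf {i : ℕ | phiCoeff φ i f ≠ 0}
  else sSup {i : ℕ | v (phiCoeff φ i f) + i • lam = augVal v φ lam f}

/-- The left endpoint `i⁰_w` of `L_w(f)`, for `w = [v, w(φ) = λ]`. -/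
def iStart (v : Polynomial K → Qinf) (φ : Polynomial K) (lam : Qinf)
    (f : Polynomial K) : ℕ :=
  if lam = ⊤ then 0
  else sInf {i : ℕ | v (phiCoeff φ i f) + i • lam = augVal v φ lam f}

end

/-- `m` is the meet `v ∧ w` of the MacLane pseudo-valuations `v` and `w`. -/
def IsMLMeet {K : Type*} [Field K] (vK : K → Qinf)
    (v w m : Polynomial K → Qinf) : Prop :=
  IsMacLane vK m ∧ m ≤ v ∧ m ≤ w ∧
  ∀ z : Polynomial K → Qinf, IsMacLane vK z → z ≤ v → z ≤ w → z ≤ m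

/-!
Two MacLane pseudo-valuations lying below a common pseudo-valuation `ν` on `K[x]` are comparable;
for `ν g = v̄(g(α))` this says that MacLane pseudo-valuations whose discoids share a point `α` are
comparable. Along the two augmentation chains this reduces to `u₁ = [v₁, φ₁, λ₁]`,
`u₂ = [v₂, φ₂, λ₂]` with `v₁ ≤ u₂` and `v₂ ≤ u₁`, and the universal property of augmentations
gives `u₁ ≤ u₂` as soon as `λ₁ ≤ u₂ φ₁` (symmetrically for `u₂ ≤ u₁`). If both fail, `ν` agrees
with `vᵢ` below degree `deg φᵢ`; this forces `deg φ₁ = deg φ₂`, and then `ν (φ₁ - φ₂)` is both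
smaller than `min λ₁ λ₂` and at least `min (ν φ₁) (ν φ₂) ≥ min λ₁ λ₂`.

If `v` and `w` are comparable, `v ∧ w` is one of them. Otherwise a strictly larger `w'` with the
same roots as `v ∧ w` would contain a root of `s` and a root of `t`, hence be comparable with both
`v` and `w`, and this makes `v` and `w` comparable.

That augmentations (and the Gauss valuation, computed `X`-adically with slope `0`) are
pseudo-valuations follows from the one-digit recursion `w (r + φ q) = min (v r) (λ + w q)` by
induction on the degree, `v`-irreducibility of `φ` preventing the residue of a product of digits
from cancelling.
-/

namespace IsPseudoVal

variable {A : Type*} [CommRing A] {v ν : A → Qinf}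

theorem map_one_eq_zero (hv : IsPseudoVal v) (h1 : v 1 ≠ ⊤) : v 1 = 0 := by
  refine (WithTop.add_left_cancel h1 ?_).symm
  rw [add_zero, ← hv.map_mul, mul_one]

theorem map_neg (hv : IsPseudoVal v) (h1 : v 1 ≠ ⊤) (a : A) : v (-a) = v a := by
  have h : v (-1) + v (-1) = 0 := by
    rw [← hv.map_mul, neg_one_mul, neg_neg, hv.map_one_eq_zero h1]
  have hneg1 : v (-1) = 0 := by
    lift v (-1) to ℚ using fun ht => by simp [ht] at h with q
    norm_cast at h ⊢
    linarith
  rw [neg_eq_neg_one_mul, hv.map_mul, hneg1, zero_add]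

theorem min_le_map_sub (hv : IsPseudoVal v) (h1 : v 1 ≠ ⊤) (a b : A) :
    min (v a) (v b) ≤ v (a - b) := by
  simpa only [sub_eq_add_neg, hv.map_neg h1] using hv.min_le_map_add a (-b)

theorem map_add_eq_of_lt (hv : IsPseudoVal v) (h1 : v 1 ≠ ⊤) {a b : A} (h : v a < v b) :
    v (a + b) = v a := by
  refine le_antisymm ?_ (min_eq_left h.le ▸ hv.min_le_map_add a b)
  by_contra! hlt
  have := hv.min_le_map_sub h1 (a + b) b
  rw [add_sub_cancel_right] at this
  exact (lt_min hlt h).not_ge this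

theorem lt_map_mul_of_lt (hv : IsPseudoVal v) (hν : IsPseudoVal ν) (hvν : v ≤ ν) {g : A}
    (hg : v g < ν g) (q : A) {x : Qinf} (hx : x ≤ v (q * g)) (hxt : x ≠ ⊤) :
    x < ν (q * g) := by
  by_cases hq : v q = ⊤
  · have hνq : ν q = ⊤ := top_le_iff.mp (hq ▸ hvν q)
    rw [hν.map_mul, hνq, top_add]
    exact lt_top_iff_ne_top.mpr hxt
  calc x ≤ v q + v g := hv.map_mul q g ▸ hx
    _ < v q + ν g := WithTop.add_lt_add_left hq hg
    _ ≤ ν q + ν g := by gcongr; exact hvν q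
    _ = ν (q * g) := (hν.map_mul q g).symm

end IsPseudoVal

section ExtPseudoVal

variable {K : Type*} [Field K] {vK : K → Qinf}

theorem IsNormDiscreteVal.map_zero (hK : IsNormDiscreteVal vK) : vK 0 = ⊤ :=
  (hK.top_iff 0).mpr rfl

theorem IsNormDiscreteVal.map_one_ne_top (hK : IsNormDiscreteVal vK) : vK 1 ≠ ⊤ :=
  fun h => one_ne_zero ((hK.top_iff 1).mp h)

structure IsExtPseudoVal (vK : K → Qinf) (v : K[X] → Qinf) : Prop extends IsPseudoVal v where
  map_C : ∀ c : K, v (C c) = vK c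

variable {v : K[X] → Qinf}

theorem IsExtPseudoVal.map_zero (hv : IsExtPseudoVal vK v) (hK : IsNormDiscreteVal vK) :
    v 0 = ⊤ := by
  rw [← C_0, hv.map_C, hK.map_zero]

theorem IsExtPseudoVal.map_one_ne_top (hv : IsExtPseudoVal vK v) (hK : IsNormDiscreteVal vK) :
    v 1 ≠ ⊤ := by
  rw [← C_1, hv.map_C]
  exact hK.map_one_ne_top

theorem IsExtVal.isExtPseudoVal_aeval {Kb : Type*} [Field Kb] [Algebra K Kb] {vbar : Kb → Qinf}
    (hvbar : IsExtVal vK vbar) (α : Kb) : IsExtPseudoVal vK (fun g => vbar (aeval α g)) where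
  map_mul a b := by simp only [map_mul, hvbar.pseudo.map_mul]
  min_le_map_add a b := by simpa only [map_add] using hvbar.pseudo.min_le_map_add _ _
  map_C c := by simp only [aeval_C, hvbar.extends_vK]

end ExtPseudoVal

section PhiAdic

variable {R : Type*} [CommRing R] {φ : R[X]}

theorem Polynomial.Monic.natDegree_divByMonic_lt [Nontrivial R] (hm : φ.Monic)
    (hd : 0 < φ.natDegree) {f : R[X]} (hf : f /ₘ φ ≠ 0) : (f /ₘ φ).natDegree < f.natDegree := by
  have : φ.natDegree ≤ f.natDegree := by
    by_contra! h
    exact hf ((divByMonic_eq_zero_iff hm).mpr (degree_lt_degree h))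
  rw [natDegree_divByMonic f hm]
  omega

theorem Polynomial.natDegree_lt_natDegree_of_degree_lt [Nontrivial R] {p q : R[X]}
    (h : p.degree < q.degree) (hq : 0 < q.natDegree) : p.natDegree < q.natDegree := by
  rcases eq_or_ne p 0 with rfl | hp
  · rwa [natDegree_zero]
  · exact natDegree_lt_natDegree hp h

theorem Polynomial.Monic.degree_sub_lt_of_natDegree_eq [Nontrivial R] {ψ : R[X]} (hψ : ψ.Monic)
    (hφ : φ.Monic) (hdeg : ψ.natDegree = φ.natDegree) : (ψ - φ).degree < φ.degree := by
  have hdeg' : ψ.degree = φ.degree := by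
    rw [degree_eq_natDegree hψ.ne_zero, degree_eq_natDegree hφ.ne_zero, hdeg]
  exact hdeg' ▸ degree_sub_lt_left hdeg' hψ.ne_zero (by rw [hψ.leadingCoeff, hφ.leadingCoeff])

theorem Polynomial.Monic.induction_add_mul [Nontrivial R] (hm : φ.Monic) (hd : 0 < φ.natDegree)
    {P : R[X] → Prop} (zero : P 0)
    (add_mul : ∀ r q, r.degree < φ.degree → P q → P (r + φ * q)) (f : R[X]) : P f := by
  induction hn : f.natDegree using Nat.strong_induction_on generalizing f with
  | _ n ih =>
    rw [← modByMonic_add_div f φ]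
    refine add_mul _ _ (degree_modByMonic_lt f hm) ?_
    by_cases hq : f /ₘ φ = 0
    · rw [hq]
      exact zero
    · exact ih _ (hn ▸ hm.natDegree_divByMonic_lt hd hq) _ rfl

/-- `w (∑ aᵢ φ^i) = minᵢ (w aᵢ + i • lam)` on `φ`-adic expansions, one digit at a time. -/
structure IsPhiAdic (w : R[X] → Qinf) (φ : R[X]) (lam : Qinf) : Prop where
  map_zero : w 0 = ⊤
  map_add_mul : ∀ r q : R[X], r.degree < φ.degree → w (r + φ * q) = min (w r) (lam + w q)

namespace IsPhiAdic

variable [Nontrivial R] {w : R[X] → Qinf} {lam : Qinf}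

theorem map_phi_mul (hw : IsPhiAdic w φ lam) (hm : φ.Monic) (q : R[X]) :
    w (φ * q) = lam + w q := by
  have h0 : (0 : R[X]).degree < φ.degree := by
    rw [degree_zero, bot_lt_iff_ne_bot, Ne, degree_eq_bot]
    exact hm.ne_zero
  simpa [hw.map_zero] using hw.map_add_mul 0 q h0

theorem map_le_modByMonic (hw : IsPhiAdic w φ lam) (hm : φ.Monic) (f : R[X]) :
    w f ≤ w (f %ₘ φ) := by
  conv_lhs => rw [← modByMonic_add_div f φ]
  rw [hw.map_add_mul _ _ (degree_modByMonic_lt f hm)]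
  exact min_le_left _ _

theorem min_le_map_add (hw : IsPhiAdic w φ lam) (hm : φ.Monic) (hd : 0 < φ.natDegree)
    (hadd : ∀ a b : R[X], a.degree < φ.degree → b.degree < φ.degree →
      min (w a) (w b) ≤ w (a + b))
    (f g : R[X]) : min (w f) (w g) ≤ w (f + g) := by
  induction f using hm.induction_add_mul hd generalizing g with
  | zero => simp [hw.map_zero]
  | add_mul r q hr ih =>
    have hb := degree_modByMonic_lt g hm
    rw [← modByMonic_add_div g φ]
    calc min (w (r + φ * q)) (w (g %ₘ φ + φ * (g /ₘ φ)))
        = min (min (w r) (w (g %ₘ φ))) (lam + min (w q) (w (g /ₘ φ))) := by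
          rw [hw.map_add_mul _ _ hr, hw.map_add_mul _ _ hb, ← min_add_add_left,
            min_min_min_comm]
      _ ≤ min (w (r + g %ₘ φ)) (lam + w (q + g /ₘ φ)) :=
          min_le_min (hadd _ _ hr hb) (by gcongr; exact ih _)
      _ = w (r + φ * q + (g %ₘ φ + φ * (g /ₘ φ))) := by
          rw [show r + φ * q + (g %ₘ φ + φ * (g /ₘ φ)) = r + g %ₘ φ + φ * (q + g /ₘ φ) by ring,
            hw.map_add_mul _ _ ((degree_add_le _ _).trans_lt (max_lt hr hb))]

theorem add_le_map_mul_of_degree_lt (hw : IsPhiAdic w φ lam) (hm : φ.Monic)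
    (hd : 0 < φ.natDegree)
    (hadd : ∀ a b : R[X], a.degree < φ.degree → b.degree < φ.degree →
      min (w a) (w b) ≤ w (a + b))
    (hmul : ∀ a b : R[X], a.degree < φ.degree → b.degree < φ.degree → w a + w b ≤ w (a * b))
    {r : R[X]} (hr : r.degree < φ.degree) (g : R[X]) : w r + w g ≤ w (r * g) := by
  induction g using hm.induction_add_mul hd with
  | zero => simp [hw.map_zero]
  | add_mul b G hb ih =>
    calc w r + w (b + φ * G) = min (w r + w b) (lam + (w r + w G)) := by
          rw [hw.map_add_mul _ _ hb, ← min_add_add_left, add_left_comm]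
      _ ≤ min (w (r * b)) (w (φ * (r * G))) := by
          rw [hw.map_phi_mul hm]
          exact min_le_min (hmul _ _ hr hb) (by gcongr)
      _ ≤ w (r * (b + φ * G)) := by
          rw [show r * (b + φ * G) = r * b + φ * (r * G) by ring]
          exact hw.min_le_map_add hm hd hadd _ _

theorem add_le_map_mul (hw : IsPhiAdic w φ lam) (hm : φ.Monic) (hd : 0 < φ.natDegree)
    (hadd : ∀ a b : R[X], a.degree < φ.degree → b.degree < φ.degree →
      min (w a) (w b) ≤ w (a + b))
    (hmul : ∀ a b : R[X], a.degree < φ.degree → b.degree < φ.degree → w a + w b ≤ w (a * b))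
    (f g : R[X]) : w f + w g ≤ w (f * g) := by
  induction f using hm.induction_add_mul hd generalizing g with
  | zero => simp [hw.map_zero]
  | add_mul r q hr ih =>
    calc w (r + φ * q) + w g = min (w r + w g) (lam + (w q + w g)) := by
          rw [hw.map_add_mul _ _ hr, ← min_add_add_right, add_assoc]
      _ ≤ min (w (r * g)) (w (φ * (q * g))) := by
          rw [hw.map_phi_mul hm]
          exact min_le_min (hw.add_le_map_mul_of_degree_lt hm hd hadd hmul hr g)
            (by gcongr; exact ih g)
      _ ≤ w ((r + φ * q) * g) := by
          rw [show (r + φ * q) * g = r * g + φ * (q * g) by ring]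
          exact hw.min_le_map_add hm hd hadd _ _

/-- `r * g` is strictly above the bound, so it cannot cancel the part `φ * q * g`. -/
theorem map_add_mul_mul_le (hw : IsPhiAdic w φ lam) (hm : φ.Monic) (hd : 0 < φ.natDegree)
    (hadd : ∀ a b : R[X], a.degree < φ.degree → b.degree < φ.degree →
      min (w a) (w b) ≤ w (a + b))
    (hneg : ∀ a : R[X], a.degree < φ.degree → w (-a) = w a)
    (hmul : ∀ a b : R[X], a.degree < φ.degree → b.degree < φ.degree → w a + w b ≤ w (a * b))
    {r q : R[X]} (hr : r.degree < φ.degree) (hlt : lam + w q < w r) (g : R[X])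
    (hqg : w (q * g) ≤ w q + w g) : w ((r + φ * q) * g) ≤ w (r + φ * q) + w g := by
  by_cases hg : w g = ⊤
  · simp [hg]
  rw [hw.map_add_mul _ _ hr, min_eq_right hlt.le]
  have hmain : w (φ * (q * g)) ≤ lam + w q + w g := by
    rw [hw.map_phi_mul hm, add_assoc]
    gcongr
  have hrest : lam + w q + w g < w (-r * g) :=
    calc lam + w q + w g < w r + w g := WithTop.add_lt_add_right hg hlt
      _ = w (-r) + w g := by rw [hneg r hr]
      _ ≤ w (-r * g) :=
          hw.add_le_map_mul_of_degree_lt hm hd hadd hmul (by rwa [degree_neg]) g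
  by_contra! h
  have := hw.min_le_map_add hm hd hadd ((r + φ * q) * g) (-r * g)
  rw [show (r + φ * q) * g + -r * g = φ * (q * g) by ring] at this
  exact (lt_min h hrest).not_ge (this.trans hmain)

theorem map_mul_le (hw : IsPhiAdic w φ lam) (hm : φ.Monic) (hd : 0 < φ.natDegree)
    (hadd : ∀ a b : R[X], a.degree < φ.degree → b.degree < φ.degree →
      min (w a) (w b) ≤ w (a + b))
    (hneg : ∀ a : R[X], a.degree < φ.degree → w (-a) = w a)
    (hmul : ∀ a b : R[X], a.degree < φ.degree → b.degree < φ.degree → w a + w b ≤ w (a * b))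
    (hmod : ∀ a b : R[X], a.degree < φ.degree → b.degree < φ.degree →
      w (a * b %ₘ φ) ≤ w a + w b)
    (f g : R[X]) : w (f * g) ≤ w f + w g := by
  induction f using hm.induction_add_mul hd generalizing g with
  | zero => simp [hw.map_zero]
  | add_mul r q hr ihq =>
    induction g using hm.induction_add_mul hd with
    | zero => simp [hw.map_zero]
    | add_mul b G hb ihG =>
      by_cases hq : lam + w q < w r
      · exact hw.map_add_mul_mul_le hm hd hadd hneg hmul hr hq _ (ihq _)
      by_cases hG : lam + w G < w b
      · rw [mul_comm, add_comm (w _)]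
        refine hw.map_add_mul_mul_le hm hd hadd hneg hmul hb hG _ ?_
        rw [mul_comm G, add_comm (w G)]
        exact ihG
      rw [not_lt] at hq hG
      calc w ((r + φ * q) * (b + φ * G)) ≤ w ((r + φ * q) * (b + φ * G) %ₘ φ) :=
            hw.map_le_modByMonic hm _
        _ = w (r * b %ₘ φ) := by
            rw [show (r + φ * q) * (b + φ * G) = r * b + φ * (r * G + q * b + φ * q * G) by ring,
              add_modByMonic, (modByMonic_eq_zero_iff_dvd hm).mpr (dvd_mul_right _ _), add_zero]
        _ ≤ w r + w b := hmod _ _ hr hb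
        _ = w (r + φ * q) + w (b + φ * G) := by
            rw [hw.map_add_mul _ _ hr, hw.map_add_mul _ _ hb, min_eq_left hq, min_eq_left hG]

theorem isPseudoVal (hw : IsPhiAdic w φ lam) (hm : φ.Monic) (hd : 0 < φ.natDegree)
    (hadd : ∀ a b : R[X], a.degree < φ.degree → b.degree < φ.degree →
      min (w a) (w b) ≤ w (a + b))
    (hneg : ∀ a : R[X], a.degree < φ.degree → w (-a) = w a)
    (hmul : ∀ a b : R[X], a.degree < φ.degree → b.degree < φ.degree → w a + w b ≤ w (a * b))
    (hmod : ∀ a b : R[X], a.degree < φ.degree → b.degree < φ.degree →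
      w (a * b %ₘ φ) ≤ w a + w b) :
    IsPseudoVal w where
  map_mul f g := le_antisymm (hw.map_mul_le hm hd hadd hneg hmul hmod f g)
    (hw.add_le_map_mul hm hd hadd hmul f g)
  min_le_map_add := hw.min_le_map_add hm hd hadd

end IsPhiAdic

end PhiAdic

section Gauss

variable {K : Type*} [Field K] {vK : K → Qinf}

theorem le_gaussVal_iff (hK : IsNormDiscreteVal vK) {x : Qinf} {g : K[X]} :
    x ≤ gaussVal vK g ↔ ∀ i, x ≤ vK (g.coeff i) := by
  refine Finset.le_inf_iff.trans ⟨fun h i => ?_, fun h i _ => h i⟩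
  by_cases hi : i ∈ g.support
  · exact h i hi
  · rw [notMem_support_iff.mp hi, hK.map_zero]
    exact le_top

theorem gaussVal_C (hK : IsNormDiscreteVal vK) (c : K) : gaussVal vK (C c) = vK c :=
  eq_of_forall_le_iff fun x => by
    rw [le_gaussVal_iff hK]
    refine ⟨fun h => by simpa using h 0, fun h i => ?_⟩
    rcases i with _ | i
    · simpa using h
    · simp [hK.map_zero]

theorem gaussVal_isPhiAdic (hK : IsNormDiscreteVal vK) : IsPhiAdic (gaussVal vK) X 0 where
  map_zero := by simp [gaussVal]
  map_add_mul r q hr := by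
    rw [degree_X, Nat.WithBot.lt_one_iff_le_zero] at hr
    rw [eq_C_of_degree_le_zero hr, gaussVal_C hK, zero_add]
    refine eq_of_forall_le_iff fun x => ?_
    simp only [le_gaussVal_iff hK, le_min_iff]
    refine ⟨fun h => ⟨by simpa using h 0, fun i => by simpa using h (i + 1)⟩, ?_⟩
    rintro ⟨h0, h⟩ (_ | i)
    · simpa using h0
    · simpa using h i

theorem gaussVal_isExtPseudoVal (hK : IsNormDiscreteVal vK) :
    IsExtPseudoVal vK (gaussVal vK) := by
  have hlow : ∀ a : K[X], a.degree < (X : K[X]).degree → ∃ c, a = C c := fun a ha =>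
    ⟨_, eq_C_of_degree_le_zero (Nat.WithBot.lt_one_iff_le_zero.mp (degree_X (R := K) ▸ ha))⟩
  have hv := (gaussVal_isPhiAdic hK).isPseudoVal monic_X (by simp)
    (fun a b ha hb => by
      obtain ⟨a, rfl⟩ := hlow a ha
      obtain ⟨b, rfl⟩ := hlow b hb
      simpa only [← C_add, gaussVal_C hK] using hK.pseudo.min_le_map_add a b)
    (fun a ha => by
      obtain ⟨a, rfl⟩ := hlow a ha
      rw [← C_neg, gaussVal_C hK, gaussVal_C hK, hK.pseudo.map_neg hK.map_one_ne_top])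
    (fun a b ha hb => by
      obtain ⟨a, rfl⟩ := hlow a ha
      obtain ⟨b, rfl⟩ := hlow b hb
      rw [← C_mul, gaussVal_C hK, gaussVal_C hK, gaussVal_C hK, hK.pseudo.map_mul])
    (fun a b ha hb => by
      obtain ⟨a, rfl⟩ := hlow a ha
      obtain ⟨b, rfl⟩ := hlow b hb
      rw [← C_mul, modByMonic_X, eval_C, gaussVal_C hK, gaussVal_C hK, gaussVal_C hK,
        hK.pseudo.map_mul])
  exact { hv with map_C := gaussVal_C hK }

end Gauss

section Augmentation

variable {K : Type*} [Field K] {vK : K → Qinf} {v : K[X] → Qinf} {φ : K[X]} {lam : Qinf}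

theorem VMinimal.not_vDvd_of_degree_lt (hmin : VMinimal v φ) (hd : 0 < φ.natDegree) {r : K[X]}
    (hr : r.degree < φ.degree) : ¬VDvd v φ r :=
  fun h => (natDegree_lt_natDegree_of_degree_lt hr hd).not_ge (hmin r h)

theorem IsPseudoVal.map_add_mul_eq_min (hv : IsPseudoVal v) (h1 : v 1 ≠ ⊤) {g c : K[X]}
    (hc : ¬VDvd v g c) (Q : K[X]) : v (c + Q * g) = min (v c) (v (Q * g)) := by
  refine le_antisymm ?_ (hv.min_le_map_add _ _)
  rcases le_or_gt (v c) (v (Q * g)) with h | h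
  · rw [min_eq_left h]
    by_contra! hlt
    refine hc ⟨-Q, ?_⟩
    show v c < v (c - -Q * g)
    rwa [neg_mul, sub_neg_eq_add]
  · rw [min_eq_right h.le, add_comm, hv.map_add_eq_of_lt h1 h]

@[simp]
theorem augValAux_zero (n : ℕ) : augValAux v φ lam n 0 = ⊤ := by
  cases n <;> simp [augValAux]

@[simp]
theorem augVal_zero : augVal v φ lam 0 = ⊤ :=
  augValAux_zero _

theorem augValAux_eq_augValAux (hm : φ.Monic) (hd : 0 < φ.natDegree) {g : K[X]} {n n' : ℕ}
    (hn : g.natDegree < n) (hn' : g.natDegree < n') :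
    augValAux v φ lam n g = augValAux v φ lam n' g := by
  induction n generalizing g n' with
  | zero => omega
  | succ n ih =>
    obtain ⟨n', rfl⟩ : ∃ k, n' = k + 1 := ⟨n' - 1, by omega⟩
    by_cases hg : g = 0
    · simp [hg]
    simp only [augValAux, if_neg hg]
    by_cases hq : g /ₘ φ = 0
    · simp [hq]
    · have hlt := hm.natDegree_divByMonic_lt hd hq
      rw [ih (n' := n') (by omega) (by omega)]

theorem augVal_eq_min (hv0 : v 0 = ⊤) (hm : φ.Monic) (hd : 0 < φ.natDegree) (f : K[X]) :
    augVal v φ lam f = min (v (f %ₘ φ)) (lam + augVal v φ lam (f /ₘ φ)) := by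
  by_cases hf : f = 0
  · simp [hf, hv0]
  rw [augVal, augValAux, if_neg hf]
  by_cases hq : f /ₘ φ = 0
  · simp [hq]
  · rw [augValAux_eq_augValAux hm hd (hm.natDegree_divByMonic_lt hd hq) (Nat.lt_succ_self _),
      augVal]

theorem augVal_of_degree_lt (hv0 : v 0 = ⊤) (hm : φ.Monic) (hd : 0 < φ.natDegree) {r : K[X]}
    (hr : r.degree < φ.degree) : augVal v φ lam r = v r := by
  rw [augVal_eq_min hv0 hm hd, (modByMonic_eq_self_iff hm).mpr hr,
    (divByMonic_eq_zero_iff hm).mpr hr, augVal_zero, add_top, min_top_right]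

theorem augVal_isPhiAdic (hv0 : v 0 = ⊤) (hm : φ.Monic) (hd : 0 < φ.natDegree) :
    IsPhiAdic (augVal v φ lam) φ lam where
  map_zero := augVal_zero
  map_add_mul r q hr := by
    obtain ⟨hq, hr'⟩ := div_modByMonic_unique q r hm ⟨rfl, hr⟩
    rw [augVal_eq_min hv0 hm hd, hq, hr', augVal_of_degree_lt hv0 hm hd hr]

theorem augVal_one (hv0 : v 0 = ⊤) : augVal v 1 lam = ⊤ := by
  funext g
  unfold augVal
  generalize g.natDegree + 1 = n
  induction n generalizing g with
  | zero => rfl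
  | succ n ih =>
    by_cases hg : g = 0
    · simp [hg]
    · simp [augValAux, hg, hv0, ih]

theorem le_augVal (hK : IsNormDiscreteVal vK) (hv : IsExtPseudoVal vK v) (hm : φ.Monic)
    (hd : 0 < φ.natDegree) (hmin : VMinimal v φ) (hlam : v φ ≤ lam) : v ≤ augVal v φ lam := by
  intro f
  induction f using hm.induction_add_mul hd with
  | zero => simp
  | add_mul r q hr ih =>
    rw [(augVal_isPhiAdic (hv.map_zero hK) hm hd).map_add_mul _ _ hr,
      augVal_of_degree_lt (hv.map_zero hK) hm hd hr, mul_comm,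
      hv.map_add_mul_eq_min (hv.map_one_ne_top hK) (hmin.not_vDvd_of_degree_lt hd hr),
      hv.map_mul, add_comm (v q)]
    exact min_le_min le_rfl (add_le_add hlam ih)

theorem augVal_self (hv0 : v 0 = ⊤) (hv1 : v 1 = 0) (hm : φ.Monic) (hd : 0 < φ.natDegree) :
    augVal v φ lam φ = lam := by
  have h1 : (1 : K[X]).degree < φ.degree := by
    rwa [degree_one, ← natDegree_pos_iff_degree_pos]
  have := (augVal_isPhiAdic (lam := lam) hv0 hm hd).map_phi_mul hm 1
  rwa [mul_one, augVal_of_degree_lt hv0 hm hd h1, hv1, add_zero] at this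

theorem augVal_of_natDegree_eq (hv0 : v 0 = ⊤) (hv1 : v 1 = 0) (hm : φ.Monic)
    (hd : 0 < φ.natDegree) {ψ : K[X]} (hψ : ψ.Monic) (hdeg : ψ.natDegree = φ.natDegree) :
    augVal v φ lam ψ = min (augVal v φ lam (ψ - φ)) lam := by
  have h1 : (1 : K[X]).degree < φ.degree := by
    rwa [degree_one, ← natDegree_pos_iff_degree_pos]
  conv_lhs => rw [show ψ = ψ - φ + φ * 1 by ring]
  rw [(augVal_isPhiAdic hv0 hm hd).map_add_mul _ _ (hψ.degree_sub_lt_of_natDegree_eq hm hdeg),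
    augVal_of_degree_lt hv0 hm hd h1, hv1, add_zero]

theorem augVal_le (hK : IsNormDiscreteVal vK) (hv0 : v 0 = ⊤) (hm : φ.Monic)
    (hd : 0 < φ.natDegree) {z : K[X] → Qinf} (hz : IsExtPseudoVal vK z) (hvz : v ≤ z)
    (hφ : lam ≤ z φ) : augVal v φ lam ≤ z := by
  intro f
  induction f using hm.induction_add_mul hd with
  | zero => simp [hz.map_zero hK]
  | add_mul r q hr ih =>
    rw [(augVal_isPhiAdic hv0 hm hd).map_add_mul _ _ hr, augVal_of_degree_lt hv0 hm hd hr]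
    refine (min_le_min (hvz r) ?_).trans (hz.min_le_map_add _ _)
    rw [hz.map_mul]
    exact add_le_add hφ ih

theorem IsKeyPoly.map_mul_modByMonic_le (hkey : IsKeyPoly v φ) (hd : 0 < φ.natDegree)
    {a b : K[X]} (ha : a.degree < φ.degree) (hb : b.degree < φ.degree) :
    v (a * b %ₘ φ) ≤ v (a * b) := by
  by_contra! h
  have hdvd : VDvd v φ (a * b) := by
    refine ⟨a * b /ₘ φ, ?_⟩
    show v (a * b) < v (a * b - a * b /ₘ φ * φ)
    rwa [show a * b - a * b /ₘ φ * φ = a * b %ₘ φ by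
      linear_combination -(modByMonic_add_div (a * b) φ)]
  rcases hkey.2.1 a b hdvd with h | h
  · exact hkey.2.2.not_vDvd_of_degree_lt hd ha h
  · exact hkey.2.2.not_vDvd_of_degree_lt hd hb h

theorem augVal_isExtPseudoVal (hK : IsNormDiscreteVal vK) (hv : IsExtPseudoVal vK v)
    (hkey : IsKeyPoly v φ) (hd : 0 < φ.natDegree) (hlam : v φ ≤ lam) :
    IsExtPseudoVal vK (augVal v φ lam) := by
  have hm := hkey.1
  have hlow : ∀ {r : K[X]}, r.degree < φ.degree → augVal v φ lam r = v r :=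
    augVal_of_degree_lt (hv.map_zero hK) hm hd
  refine { (augVal_isPhiAdic (hv.map_zero hK) hm hd).isPseudoVal hm hd ?_ ?_ ?_ ?_ with
    map_C := fun c => ?_ }
  · intro a b ha hb
    rw [hlow ha, hlow hb, hlow ((degree_add_le _ _).trans_lt (max_lt ha hb))]
    exact hv.min_le_map_add a b
  · intro a ha
    rw [hlow (by rwa [degree_neg]), hlow ha, hv.map_neg (hv.map_one_ne_top hK)]
  · intro a b ha hb
    rw [hlow ha, hlow hb, ← hv.map_mul]
    exact le_augVal hK hv hm hd hkey.2.2 hlam _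
  · intro a b ha hb
    rw [hlow (degree_modByMonic_lt _ hm), hlow ha, hlow hb, ← hv.map_mul]
    exact hkey.map_mul_modByMonic_le hd ha hb
  · rw [hlow (degree_C_le.trans_lt (natDegree_pos_iff_degree_pos.mp hd)), hv.map_C]

end Augmentation

section MacLane

variable {K : Type*} [Field K] {vK : K → Qinf} {v ν : K[X] → Qinf} {φ : K[X]} {lam : Qinf}

/-- The constant `1` is a key polynomial over every `v`, and augmenting by it gives `⊤`. -/
theorem IsMacLane.isExtPseudoVal_or_eq_top (hK : IsNormDiscreteVal vK) {u : K[X] → Qinf}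
    (hu : IsMacLane vK u) : IsExtPseudoVal vK u ∨ u = ⊤ := by
  induction hu with
  | gauss => exact Or.inl (gaussVal_isExtPseudoVal hK)
  | @aug v φ lam _ hkey hlam ih =>
    obtain hv | rfl := ih
    · rcases Nat.eq_zero_or_pos φ.natDegree with hd | hd
      · right
        rw [hkey.1.natDegree_eq_zero.mp hd, augVal_one (hv.map_zero hK)]
      · exact Or.inl (augVal_isExtPseudoVal hK hv hkey hd hlam.le)
    · exact absurd hlam not_top_lt

theorem IsMacLane.le_augVal (hK : IsNormDiscreteVal vK) (hv : IsMacLane vK v)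
    (hkey : IsKeyPoly v φ) (hlam : v φ < lam) : v ≤ augVal v φ lam := by
  obtain hv | rfl := hv.isExtPseudoVal_or_eq_top hK
  · rcases Nat.eq_zero_or_pos φ.natDegree with hd | hd
    · rw [hkey.1.natDegree_eq_zero.mp hd, augVal_one (hv.map_zero hK)]
      exact le_top
    · exact _root_.le_augVal hK hv hkey.1 hd hkey.2.2 hlam.le
  · exact absurd hlam not_top_lt

theorem IsMacLane.gaussVal_le (hK : IsNormDiscreteVal vK) {u : K[X] → Qinf}
    (hu : IsMacLane vK u) : gaussVal vK ≤ u := by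
  induction hu with
  | gauss => exact le_rfl
  | aug hv hkey hlam ih => exact ih.trans (hv.le_augVal hK hkey hlam)

structure IsProperAug (vK : K → Qinf) (v : K[X] → Qinf) (φ : K[X]) (lam : Qinf) : Prop where
  isExtPseudoVal : IsExtPseudoVal vK v
  isKeyPoly : IsKeyPoly v φ
  natDegree_pos : 0 < φ.natDegree
  lt : v φ < lam

theorem IsMacLane.isProperAug_of_augVal_le (hK : IsNormDiscreteVal vK) (hv : IsMacLane vK v)
    (hkey : IsKeyPoly v φ) (hlam : v φ < lam) (hν : IsExtPseudoVal vK ν)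
    (hle : augVal v φ lam ≤ ν) : IsProperAug vK v φ lam := by
  obtain hv | rfl := hv.isExtPseudoVal_or_eq_top hK
  · refine ⟨hv, hkey, Nat.pos_of_ne_zero fun hd => ?_, hlam⟩
    rw [hkey.1.natDegree_eq_zero.mp hd, augVal_one (hv.map_zero hK)] at hle
    exact hν.map_one_ne_top hK (top_le_iff.mp (hle 1))
  · exact absurd hlam not_top_lt

end MacLane

section Comparison

variable {K : Type*} [Field K] {vK : K → Qinf} {v ν : K[X] → Qinf} {φ : K[X]} {lam : Qinf}

theorem IsPseudoVal.not_vDvd_of_lt (hv : IsPseudoVal v) (h1 : v 1 ≠ ⊤) (hν : IsPseudoVal ν)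
    (hvν : v ≤ ν) {g p : K[X]} (hg : v g < ν g) (hp : ν p = v p) : ¬VDvd v g p := by
  rintro ⟨q, hq⟩
  change v p < v (p - q * g) at hq
  have hvqg : v p ≤ v (q * g) := by
    have := hv.min_le_map_sub h1 p (p - q * g)
    rwa [sub_sub_cancel, min_eq_left hq.le] at this
  have hqg : ν p < ν (q * g) := hp ▸ hv.lt_map_mul_of_lt hν hvν hg q hvqg hq.ne_top
  have hpq : ν p < ν (p - q * g) := hp ▸ hq.trans_le (hvν _)
  have := hν.min_le_map_add (p - q * g) (q * g)
  rw [sub_add_cancel] at this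
  exact (lt_min hpq hqg).not_ge this

namespace IsProperAug

theorem le_augVal (hK : IsNormDiscreteVal vK) (h : IsProperAug vK v φ lam) :
    v ≤ augVal v φ lam :=
  _root_.le_augVal hK h.isExtPseudoVal h.isKeyPoly.1 h.natDegree_pos h.isKeyPoly.2.2 h.lt.le

theorem augVal_isExtPseudoVal (hK : IsNormDiscreteVal vK) (h : IsProperAug vK v φ lam) :
    IsExtPseudoVal vK (augVal v φ lam) :=
  _root_.augVal_isExtPseudoVal hK h.isExtPseudoVal h.isKeyPoly h.natDegree_pos h.lt.le

theorem map_one (hK : IsNormDiscreteVal vK) (h : IsProperAug vK v φ lam) : v 1 = 0 :=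
  h.isExtPseudoVal.map_one_eq_zero (h.isExtPseudoVal.map_one_ne_top hK)

theorem augVal_self (hK : IsNormDiscreteVal vK) (h : IsProperAug vK v φ lam) :
    augVal v φ lam φ = lam :=
  _root_.augVal_self (h.isExtPseudoVal.map_zero hK) (h.map_one hK) h.isKeyPoly.1 h.natDegree_pos

theorem augVal_of_natDegree_eq (hK : IsNormDiscreteVal vK) (h : IsProperAug vK v φ lam)
    {ψ : K[X]} (hψ : ψ.Monic) (hdeg : ψ.natDegree = φ.natDegree) :
    augVal v φ lam ψ = min (augVal v φ lam (ψ - φ)) lam :=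
  _root_.augVal_of_natDegree_eq (h.isExtPseudoVal.map_zero hK) (h.map_one hK) h.isKeyPoly.1
    h.natDegree_pos hψ hdeg

/-- Above `[v, w(φ) = lam]`, a polynomial `g` of least degree on which `ν` gains over `v` would be
`v`-minimal; dividing `φ` by `g` then contradicts the `v`-irreducibility of `φ`. -/
theorem map_le_of_map_eq_of_degree_lt (hK : IsNormDiscreteVal vK) (h : IsProperAug vK v φ lam)
    (hν : IsExtPseudoVal vK ν) (hle : augVal v φ lam ≤ ν) {g : K[X]}
    (hg : g.natDegree < φ.natDegree) (hg0 : 0 < g.natDegree)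
    (hlow : ∀ p : K[X], p.degree < g.degree → ν p = v p) : ν g ≤ v g := by
  have hv := h.isExtPseudoVal
  have h1 := hv.map_one_ne_top hK
  have hvν : v ≤ ν := (h.le_augVal hK).trans hle
  by_contra! hgain
  obtain ⟨s, Q, hs, hQ, hφ⟩ : ∃ s Q : K[X], s.degree < g.degree ∧
      Q.natDegree < φ.natDegree ∧ s + Q * g = φ :=
    ⟨φ % g, φ / g, degree_mod_lt φ (by rintro rfl; simp at hg0),
      natDegree_lt_natDegree_of_degree_lt
        (degree_div_lt h.isKeyPoly.1.ne_zero (natDegree_pos_iff_degree_pos.mp hg0))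
        h.natDegree_pos,
      by rw [mul_comm]; exact EuclideanDomain.mod_add_div φ g⟩
  have hvφ : v φ = min (v s) (v (Q * g)) := by
    rw [← hφ]
    exact hv.map_add_mul_eq_min h1 (hv.not_vDvd_of_lt h1 hν.1 hvν hgain (hlow _ hs)) _
  have hsφ : v φ < v s := by
    by_contra! hle'
    have hseq : v s = v φ := le_antisymm hle' (hvφ ▸ min_le_left _ _)
    have hsQ : ν s < ν (Q * g) := (hlow _ hs).symm ▸ hv.lt_map_mul_of_lt hν.1 hvν hgain
      _ (hseq ▸ hvφ ▸ min_le_right _ _) (hseq ▸ h.lt.ne_top)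
    have hνφ : ν φ = v φ :=
      calc ν φ = ν s := by rw [← hφ, hν.map_add_eq_of_lt (hν.map_one_ne_top hK) hsQ]
        _ = v φ := by rw [hlow _ hs, hseq]
    exact (h.lt.trans_le ((h.augVal_self hK).symm.trans_le (hle φ))).ne' hνφ
  have hQφ : v (Q * g) = v φ := by
    rcases min_choice (v s) (v (Q * g)) with hm | hm <;> rw [hm] at hvφ
    · exact absurd hvφ hsφ.ne
    · exact hvφ.symm
  have hdvd : VDvd v φ (Q * g) := by
    refine ⟨1, ?_⟩
    show v (Q * g) < v (Q * g - 1 * φ)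
    rwa [show Q * g - 1 * φ = -s by rw [← hφ]; ring, hv.map_neg h1, hQφ]
  rcases h.isKeyPoly.2.1 _ _ hdvd with hQ' | hg'
  · exact hQ.not_ge (h.isKeyPoly.2.2 _ hQ')
  · exact hg.not_ge (h.isKeyPoly.2.2 _ hg')

theorem map_eq_of_augVal_le (hK : IsNormDiscreteVal vK) (h : IsProperAug vK v φ lam)
    (hν : IsExtPseudoVal vK ν) (hle : augVal v φ lam ≤ ν) {g : K[X]}
    (hg : g.natDegree < φ.natDegree) : ν g = v g := by
  induction hn : g.natDegree using Nat.strong_induction_on generalizing g with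
  | _ n ih =>
  rcases Nat.eq_zero_or_pos g.natDegree with hg0 | hg0
  · rw [eq_C_of_natDegree_eq_zero hg0, hν.map_C, h.isExtPseudoVal.map_C]
  refine le_antisymm (h.map_le_of_map_eq_of_degree_lt hK hν hle hg hg0 fun p hp => ?_)
    ((h.le_augVal hK).trans hle g)
  have hpg := natDegree_lt_natDegree_of_degree_lt hp hg0
  exact ih _ (hn ▸ hpg) (hpg.trans hg) rfl

theorem map_eq_augVal_of_le (hK : IsNormDiscreteVal vK) (h : IsProperAug vK v φ lam)
    (hν : IsExtPseudoVal vK ν) (hle : augVal v φ lam ≤ ν) {g : K[X]}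
    (hg : g.degree < φ.degree) : ν g = augVal v φ lam g := by
  rw [augVal_of_degree_lt (h.isExtPseudoVal.map_zero hK) h.isKeyPoly.1 h.natDegree_pos hg,
    h.map_eq_of_augVal_le hK hν hle (natDegree_lt_natDegree_of_degree_lt hg h.natDegree_pos)]

end IsProperAug

end Comparison

section Comparability

variable {K : Type*} [Field K] {vK : K → Qinf} {ν v₁ v₂ : K[X] → Qinf} {φ₁ φ₂ : K[X]}
  {lam₁ lam₂ : Qinf}

namespace IsProperAug

theorem natDegree_le_of_augVal_lt (hK : IsNormDiscreteVal vK) (h₁ : IsProperAug vK v₁ φ₁ lam₁)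
    (h₂ : IsProperAug vK v₂ φ₂ lam₂) (hν : IsExtPseudoVal vK ν) (hle₁ : augVal v₁ φ₁ lam₁ ≤ ν)
    (hle₂ : augVal v₂ φ₂ lam₂ ≤ ν) (hlt : augVal v₂ φ₂ lam₂ φ₁ < lam₁) :
    φ₂.natDegree ≤ φ₁.natDegree := by
  by_contra! hdeg
  rw [← h₂.map_eq_augVal_of_le hK hν hle₂ (degree_lt_degree hdeg)] at hlt
  exact hlt.not_ge ((h₁.augVal_self hK).symm.trans_le (hle₁ φ₁))

theorem le_augVal_or_le_augVal (hK : IsNormDiscreteVal vK) (h₁ : IsProperAug vK v₁ φ₁ lam₁)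
    (h₂ : IsProperAug vK v₂ φ₂ lam₂) (hν : IsExtPseudoVal vK ν) (hle₁ : augVal v₁ φ₁ lam₁ ≤ ν)
    (hle₂ : augVal v₂ φ₂ lam₂ ≤ ν) :
    lam₁ ≤ augVal v₂ φ₂ lam₂ φ₁ ∨ lam₂ ≤ augVal v₁ φ₁ lam₁ φ₂ := by
  by_contra! ⟨hlt₁, hlt₂⟩
  have hdeg : φ₁.natDegree = φ₂.natDegree :=
    le_antisymm (h₂.natDegree_le_of_augVal_lt hK h₁ hν hle₂ hle₁ hlt₂)
      (h₁.natDegree_le_of_augVal_lt hK h₂ hν hle₁ hle₂ hlt₁)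
  have hm₁ := h₁.isKeyPoly.1
  have hm₂ := h₂.isKeyPoly.1
  rw [h₂.augVal_of_natDegree_eq hK hm₁ hdeg,
    ← h₂.map_eq_augVal_of_le hK hν hle₂ (hm₁.degree_sub_lt_of_natDegree_eq hm₂ hdeg)] at hlt₁
  rw [h₁.augVal_of_natDegree_eq hK hm₂ hdeg.symm,
    ← h₁.map_eq_augVal_of_le hK hν hle₁ (hm₂.degree_sub_lt_of_natDegree_eq hm₁ hdeg.symm),
    ← neg_sub, hν.map_neg (hν.map_one_ne_top hK)] at hlt₂
  have hmin : min lam₁ lam₂ ≤ ν (φ₁ - φ₂) :=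
    (min_le_min ((h₁.augVal_self hK).symm.trans_le (hle₁ φ₁))
      ((h₂.augVal_self hK).symm.trans_le (hle₂ φ₂))).trans
      (hν.min_le_map_sub (hν.map_one_ne_top hK) _ _)
  simp only [min_lt_iff, min_le_iff] at hlt₁ hlt₂ hmin
  rcases hlt₁ with h | h <;> rcases hlt₂ with h' | h' <;> rcases hmin with h'' | h'' <;> order

theorem augVal_le_or_le (hK : IsNormDiscreteVal vK) (h₁ : IsProperAug vK v₁ φ₁ lam₁)
    (h₂ : IsProperAug vK v₂ φ₂ lam₂) (hν : IsExtPseudoVal vK ν) (hle₁ : augVal v₁ φ₁ lam₁ ≤ ν)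
    (hle₂ : augVal v₂ φ₂ lam₂ ≤ ν) (hv₁ : v₁ ≤ augVal v₂ φ₂ lam₂)
    (hv₂ : v₂ ≤ augVal v₁ φ₁ lam₁) :
    augVal v₁ φ₁ lam₁ ≤ augVal v₂ φ₂ lam₂ ∨ augVal v₂ φ₂ lam₂ ≤ augVal v₁ φ₁ lam₁ :=
  (h₁.le_augVal_or_le_augVal hK h₂ hν hle₁ hle₂).imp
    (augVal_le hK (h₁.isExtPseudoVal.map_zero hK) h₁.isKeyPoly.1 h₁.natDegree_pos
      (h₂.augVal_isExtPseudoVal hK) hv₁)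
    (augVal_le hK (h₂.isExtPseudoVal.map_zero hK) h₂.isKeyPoly.1 h₂.natDegree_pos
      (h₁.augVal_isExtPseudoVal hK) hv₂)

end IsProperAug

theorem IsMacLane.le_or_le_of_le (hK : IsNormDiscreteVal vK) (hν : IsExtPseudoVal vK ν)
    {u₁ u₂ : K[X] → Qinf} (h₁ : IsMacLane vK u₁) (h₂ : IsMacLane vK u₂) (hu₁ : u₁ ≤ ν)
    (hu₂ : u₂ ≤ ν) : u₁ ≤ u₂ ∨ u₂ ≤ u₁ := by
  induction h₁ generalizing u₂ with
  | gauss => exact Or.inl (h₂.gaussVal_le hK)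
  | aug hv₁ hkey₁ hlam₁ ih₁ =>
    induction h₂ with
    | gauss => exact Or.inr ((IsMacLane.aug hv₁ hkey₁ hlam₁).gaussVal_le hK)
    | aug hv₂ hkey₂ hlam₂ ih₂ =>
      have hle₁ := hv₁.le_augVal hK hkey₁ hlam₁
      have hle₂ := hv₂.le_augVal hK hkey₂ hlam₂
      rcases ih₂ (hle₂.trans hu₂) with h | h
      · exact Or.inl (h.trans hle₂)
      rcases ih₁ (.aug hv₂ hkey₂ hlam₂) (hle₁.trans hu₁) hu₂ with h' | h'
      · exact (hv₁.isProperAug_of_augVal_le hK hkey₁ hlam₁ hν hu₁).augVal_le_or_le hK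
          (hv₂.isProperAug_of_augVal_le hK hkey₂ hlam₂ hν hu₂) hν hu₁ hu₂ h' h
      · exact Or.inr (h'.trans hle₁)

end Comparability

section Clusters

variable {K : Type*} [Field K] {Kb : Type*} [Field Kb] [Algebra K Kb] {vK : K → Qinf}
  {vbar : Kb → Qinf} {v w m : K[X] → Qinf}

theorem Dset_anti (h : v ≤ w) : Dset vbar w ⊆ Dset vbar v :=
  fun _ hα g => (h g).trans (hα g)

theorem IsMacLane.le_or_le_of_mem_Dset (hK : IsNormDiscreteVal vK) (hvbar : IsExtVal vK vbar)
    (hv : IsMacLane vK v) (hw : IsMacLane vK w) {α : Kb} (hαv : α ∈ Dset vbar v)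
    (hαw : α ∈ Dset vbar w) : v ≤ w ∨ w ≤ v :=
  hv.le_or_le_of_le hK (hvbar.isExtPseudoVal_aeval α) hw hαv hαw

theorem IsMLMeet.eq_left (hm : IsMLMeet vK v w m) (hv : IsMacLane vK v) (h : v ≤ w) : m = v :=
  le_antisymm hm.2.1 (hm.2.2.2 v hv le_rfl h)

theorem IsMLMeet.eq_right (hm : IsMLMeet vK v w m) (hw : IsMacLane vK w) (h : w ≤ v) : m = w :=
  le_antisymm hm.2.2.1 (hm.2.2.2 w hw h le_rfl)

theorem IsMLMeet.le_or_le_of_mem_Dset (hK : IsNormDiscreteVal vK) (hvbar : IsExtVal vK vbar)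
    (hm : IsMLMeet vK v w m) (hv : IsMacLane vK v) (hw : IsMacLane vK w)
    {w' : K[X] → Qinf} (hw' : IsMacLane vK w') (hw'm : ¬w' ≤ m) {α β : Kb}
    (hα : α ∈ Dset vbar v) (hα' : α ∈ Dset vbar w') (hβ : β ∈ Dset vbar w)
    (hβ' : β ∈ Dset vbar w') : v ≤ w ∨ w ≤ v := by
  rcases hv.le_or_le_of_mem_Dset hK hvbar hw' hα hα' with hvw' | hw'v
  · exact hv.le_or_le_of_mem_Dset hK hvbar hw (Dset_anti hvw' hβ') hβ
  rcases hw.le_or_le_of_mem_Dset hK hvbar hw' hβ hβ' with hww' | hw'w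
  · exact hv.le_or_le_of_mem_Dset hK hvbar hw hα (Dset_anti hww' hα')
  · exact absurd (hm.2.2.2 w' hw' hw'v hw'w) hw'm

end Clusters

theorem meet_is_smallest_containing_cluster_general
    {K : Type*} [Field K] {Kb : Type*} [Field Kb] [Algebra K Kb]
    (vK : K → Qinf) (hK : IsNormDiscreteVal vK)
    (vbar : Kb → Qinf) (hvbar : IsExtVal vK vbar)
    (f : Polynomial K)
    (s t : Set Kb) (v w : Polynomial K → Qinf)
    (hsv : IsMLCluster vK vbar f s v) (htw : IsMLCluster vK vbar f t w)
    (m : Polynomial K → Qinf) (hm : IsMLMeet vK v w m) :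
    IsMLCluster vK vbar f (Dset vbar m ∩ rootSetOf f) m ∧
    ∀ (u : Set Kb) (z : Polynomial K → Qinf), IsMLCluster vK vbar f u z →
      z ≤ v → z ≤ w → z ≤ m := by
  refine ⟨?_, fun u z hz hzv hzw => hm.2.2.2 z hz.1 hzv hzw⟩
  by_cases hvw : v ≤ w
  · rw [hm.eq_left hsv.1 hvw, ← hsv.2.2.1]
    exact hsv
  by_cases hwv : w ≤ v
  · rw [hm.eq_right htw.1 hwv, ← htw.2.2.1]
    exact htw
  obtain ⟨α, hα⟩ := hsv.2.1
  obtain ⟨β, hβ⟩ := htw.2.1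
  rw [hsv.2.2.1] at hα
  rw [htw.2.2.1] at hβ
  have hαm : α ∈ Dset vbar m ∩ rootSetOf f := ⟨Dset_anti hm.2.1 hα.1, hα.2⟩
  have hβm : β ∈ Dset vbar m ∩ rootSetOf f := ⟨Dset_anti hm.2.2.1 hβ.1, hβ.2⟩
  refine ⟨hm.1, ⟨α, hαm⟩, rfl, fun w' hw' hlt hset => ?_⟩
  rw [hset] at hαm hβm
  exact absurd (hm.le_or_le_of_mem_Dset hK hvbar hsv.1 htw.1 hw' hlt.not_ge hα.1 hαm.1 hβ.1 hβm.1)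
    (not_or.mpr ⟨hvw, hwv⟩)

/-- Lemma `lem:wedgecluster`.
Let `(s,v)`, `(t,w)` be MacLane clusters for `f` and let `s ∧ t = D_{v∧w} ∩ R`.
Then `(s∧t, v∧w)` is a MacLane cluster for `f`, and it is the smallest MacLane
cluster containing `(s,v)` and `(t,w)`: any MacLane cluster `(u,z)` with `z ≤ v`
and `z ≤ w` satisfies `z ≤ v ∧ w`. -/
theorem meet_is_smallest_containing_cluster
    {K : Type*} [Field K] {Kb : Type*} [Field Kb] [Algebra K Kb] [IsAlgClosure K Kb]
    (vK : K → Qinf) (hK : IsNormDiscreteVal vK) (hcompl : IsCompleteVal vK)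
    (vbar : Kb → Qinf) (hvbar : IsExtVal vK vbar)
    (f : Polynomial K) (hsep : f.Separable)
    (hfint : ∀ i : ℕ, 0 ≤ vK ((Polynomial.C f.leadingCoeff⁻¹ * f).coeff i))
    (s t : Set Kb) (v w : Polynomial K → Qinf)
    (hsv : IsMLCluster vK vbar f s v) (htw : IsMLCluster vK vbar f t w)
    (m : Polynomial K → Qinf) (hm : IsMLMeet vK v w m) :
    IsMLCluster vK vbar f (Dset vbar m ∩ rootSetOf f) m ∧
    ∀ (u : Set Kb) (z : Polynomial K → Qinf), IsMLCluster vK vbar f u z →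
      z ≤ v → z ≤ w → z ≤ m :=
  meet_is_smallest_containing_cluster_general vK hK vbar hvbar f s t v w hsv htw m hm
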